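/- Let Γ be a torsion-free abelian group equipped with a function |·|_∞ : Γ → ℝ that is ℤ-homogeneous (|nγ|_∞ = |n||γ|_∞), subadditive, and bounded below by some s > 0 on Γ \ {0}. Suppose Γ has rank k, with linearly independent σ₁,...,σ_k such that the induced function on ℤ^k extends to a norm ‖·‖_∞ on ℝ^k. Then Γ is isomorphic to ℤ^k. -/

import Mathlib

/-!
Choosing for each `γ` a relation `n • γ = ∑ aᵢ • σᵢ` with `n ≠ 0` gives rational coordinates
`a / n`; by linear independence of the `σᵢ` they do not depend on the choice, so they define an
additive map `Γ → ℝᵏ`. Homogeneity of `f` and of `N` give `N (a / n) = f γ`, so the map is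
injective and its image meets the open set `{N < s}` only in `0`: it is a discrete subgroup of
`ℝᵏ` containing the standard basis, i.e. a full lattice, hence free of rank `k`.
-/

open Finset

section RationalCoordinates

variable {Γ ι : Type*} [AddCommGroup Γ] [Fintype ι] {σ : ι → Γ}

lemma smul_eq_smul_of_smul_eq_sum (hindep : ∀ a : ι → ℤ, ∑ i, a i • σ i = 0 → a = 0)
    {γ : Γ} {m n : ℤ} {a b : ι → ℤ} (ha : m • γ = ∑ i, a i • σ i)
    (hb : n • γ = ∑ i, b i • σ i) : n • a = m • b := by
  have h : ∑ i, (n • a - m • b) i • σ i = 0 := by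
    simp only [Pi.sub_apply, Pi.smul_apply, sub_smul, smul_assoc, sum_sub_distrib, ← smul_sum,
      ← ha, ← hb, smul_comm n m γ, sub_self]
  exact sub_eq_zero.mp (hindep _ h)

noncomputable def ratCoords
    (hrank : ∀ γ : Γ, ∃ n : ℤ, n ≠ 0 ∧ ∃ a : ι → ℤ, n • γ = ∑ i, a i • σ i) (γ : Γ) : ι → ℝ :=
  ((hrank γ).choose : ℝ)⁻¹ • fun i => ((hrank γ).choose_spec.2.choose i : ℝ)

variable (hrank : ∀ γ : Γ, ∃ n : ℤ, n ≠ 0 ∧ ∃ a : ι → ℤ, n • γ = ∑ i, a i • σ i)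

lemma ratCoords_eq (hindep : ∀ a : ι → ℤ, ∑ i, a i • σ i = 0 → a = 0) {γ : Γ} {m : ℤ}
    {a : ι → ℤ} (hm : m ≠ 0) (ha : m • γ = ∑ i, a i • σ i) :
    ratCoords hrank γ = (m : ℝ)⁻¹ • fun i => (a i : ℝ) := by
  obtain ⟨hn, hb⟩ := (hrank γ).choose_spec
  have hcross := congrFun (smul_eq_smul_of_smul_eq_sum hindep hb.choose_spec ha)
  ext i
  have hi : (m : ℝ) * hb.choose i = (hrank γ).choose * a i := by exact_mod_cast hcross i
  have hn' : ((hrank γ).choose : ℝ) ≠ 0 := by exact_mod_cast hn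
  have hm' : (m : ℝ) ≠ 0 := by exact_mod_cast hm
  simp only [ratCoords, Pi.smul_apply, smul_eq_mul]
  field_simp
  linarith

lemma ratCoords_add (hindep : ∀ a : ι → ℤ, ∑ i, a i • σ i = 0 → a = 0) (γ δ : Γ) :
    ratCoords hrank (γ + δ) = ratCoords hrank γ + ratCoords hrank δ := by
  obtain ⟨m, hm, a, ha⟩ := hrank γ
  obtain ⟨n, hn, b, hb⟩ := hrank δ
  have hsum : (m * n) • (γ + δ) = ∑ i, (n * a i + m * b i) • σ i := by
    simp only [add_smul, sum_add_distrib, mul_smul, ← smul_sum, ← ha, ← hb, smul_add,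
      smul_comm n m γ]
  rw [ratCoords_eq hrank hindep (mul_ne_zero hm hn) hsum, ratCoords_eq hrank hindep hm ha,
    ratCoords_eq hrank hindep hn hb]
  have hm' : (m : ℝ) ≠ 0 := by exact_mod_cast hm
  have hn' : (n : ℝ) ≠ 0 := by exact_mod_cast hn
  ext i
  simp only [Pi.add_apply, Pi.smul_apply, smul_eq_mul, Int.cast_add, Int.cast_mul]
  field_simp

lemma ratCoords_eq_single (hindep : ∀ a : ι → ℤ, ∑ i, a i • σ i = 0 → a = 0)
    [DecidableEq ι] (j : ι) : ratCoords hrank (σ j) = Pi.single j 1 := by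
  have hj : (1 : ℤ) • σ j = ∑ i, (Pi.single j 1 : ι → ℤ) i • σ i := by
    simp [Pi.single_apply]
  rw [ratCoords_eq hrank hindep one_ne_zero hj]
  ext i
  simp [Pi.single_apply]

noncomputable def ratCoordsHom (hindep : ∀ a : ι → ℤ, ∑ i, a i • σ i = 0 → a = 0) :
    Γ →+ (ι → ℝ) :=
  AddMonoidHom.mk' (ratCoords hrank) (ratCoords_add hrank hindep)

lemma apply_ratCoords {f : Γ → ℝ} {N : (ι → ℝ) → ℝ}
    (hhom : ∀ (n : ℤ) (γ : Γ), f (n • γ) = |(n : ℝ)| * f γ)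
    (Nhom : ∀ (r : ℝ) (u : ι → ℝ), N (r • u) = |r| * N u)
    (hext : ∀ a : ι → ℤ, N (fun i => (a i : ℝ)) = f (∑ i, a i • σ i)) (γ : Γ) :
    N (ratCoords hrank γ) = f γ := by
  obtain ⟨hn, ha⟩ := (hrank γ).choose_spec
  have hn' : |((hrank γ).choose : ℝ)| ≠ 0 := by positivity
  rw [ratCoords, Nhom, hext, ← ha.choose_spec, hhom, abs_inv, inv_mul_cancel_left₀ hn']

lemma span_range_ratCoordsHom (hindep : ∀ a : ι → ℤ, ∑ i, a i • σ i = 0 → a = 0) :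
    Submodule.span ℝ (Set.range (ratCoordsHom hrank hindep)) = ⊤ := by
  classical
  refine eq_top_iff.mpr ((Pi.basisFun ℝ ι).span_eq.symm.le.trans (Submodule.span_mono ?_))
  rintro _ ⟨j, rfl⟩
  exact ⟨σ j, (ratCoords_eq_single hrank hindep j).trans (Pi.basisFun_apply ℝ ι j).symm⟩

end RationalCoordinates

lemma continuous_of_abs_smul_of_add_le {E : Type*} [NormedAddCommGroup E] [NormedSpace ℝ E]
    [FiniteDimensional ℝ E] {N : E → ℝ} (Nhom : ∀ (r : ℝ) (u : E), N (r • u) = |r| * N u)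
    (Ntri : ∀ u v : E, N (u + v) ≤ N u + N v) : Continuous N := by
  have hconv : ConvexOn ℝ Set.univ N := by
    refine ⟨convex_univ, fun u _ v _ a b ha hb _ => ?_⟩
    calc N (a • u + b • v) ≤ N (a • u) + N (b • v) := Ntri _ _
      _ = a • N u + b • N v := by rw [Nhom, Nhom, abs_of_nonneg ha, abs_of_nonneg hb]; rfl
  exact continuousOn_univ.mp (hconv.continuousOn isOpen_univ)

lemma Submodule.discreteTopology_of_le_of_ne_zero {E : Type*} [AddCommGroup E]
    [TopologicalSpace E] [IsTopologicalAddGroup E] (L : Submodule ℤ E) {N : E → ℝ}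
    (hN : Continuous N) {s : ℝ}
    (h0 : N 0 < s) (hL : ∀ x ∈ L, x ≠ 0 → s ≤ N x) : DiscreteTopology L := by
  rw [discreteTopology_iff_isOpen_singleton_zero]
  have hzero : ({0} : Set L) = Subtype.val ⁻¹' {x | N x < s} := by
    ext ⟨x, hx⟩
    simp only [Set.mem_singleton_iff, Set.mem_preimage, Set.mem_ofPred_eq, Submodule.mk_eq_zero]
    refine ⟨fun h => h ▸ h0, fun hx' => ?_⟩
    by_contra hne
    exact (hL x hx hne).not_gt hx'
  rw [hzero]
  exact (isOpen_lt hN continuous_const).preimage continuous_subtype_val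

lemma ZLattice.nonempty_linearEquiv_pi {ι : Type*} [Fintype ι] (L : Submodule ℤ (ι → ℝ))
    [DiscreteTopology L] [IsZLattice ℝ L] : Nonempty (L ≃ₗ[ℤ] (ι → ℤ)) := by
  have := ZLattice.module_free ℝ L
  have := ZLattice.module_finite ℝ L
  apply FiniteDimensional.nonempty_linearEquiv_of_finrank_eq
  rw [ZLattice.rank ℝ L, Module.finrank_fintype_fun_eq_card, Module.finrank_fintype_fun_eq_card]

theorem stmt5_general (Γ : Type*) [AddCommGroup Γ] (f : Γ → ℝ) (s : ℝ) (hs : 0 < s)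
    (hhom : ∀ (n : ℤ) (γ : Γ), f (n • γ) = |(n : ℝ)| * f γ)
    (hlow : ∀ γ : Γ, γ ≠ 0 → s ≤ f γ)
    (k : ℕ) (σ : Fin k → Γ)
    (hindep : ∀ a : Fin k → ℤ, ∑ i, a i • σ i = 0 → a = 0)
    (hrank : ∀ γ : Γ, ∃ n : ℤ, n ≠ 0 ∧ ∃ a : Fin k → ℤ, n • γ = ∑ i, a i • σ i)
    (N : (Fin k → ℝ) → ℝ)
    (Nhom : ∀ (r : ℝ) (u : Fin k → ℝ), N (r • u) = |r| * N u)
    (Ntri : ∀ u v : Fin k → ℝ, N (u + v) ≤ N u + N v)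
    (hext : ∀ a : Fin k → ℤ, N (fun i => (a i : ℝ)) = f (∑ i, a i • σ i)) :
    Nonempty (Γ ≃+ (Fin k → ℤ)) := by
  set F := (ratCoordsHom hrank hindep).toIntLinearMap
  have hNF : ∀ γ, N (F γ) = f γ := apply_ratCoords hrank hhom Nhom hext
  have hN0 : N 0 = 0 := by simpa using Nhom 0 0
  have hF : Function.Injective F := by
    refine (injective_iff_map_eq_zero F).mpr fun γ hγ => ?_
    by_contra hne
    exact (hlow γ hne).not_gt (by rw [← hNF γ, hγ, hN0]; exact hs)
  have : DiscreteTopology (LinearMap.range F) := by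
    refine (LinearMap.range F).discreteTopology_of_le_of_ne_zero
      (continuous_of_abs_smul_of_add_le Nhom Ntri) (hN0 ▸ hs) ?_
    rintro _ ⟨γ, rfl⟩ hne
    exact hNF γ ▸ hlow γ (by rintro rfl; exact hne (map_zero F))
  have : IsZLattice ℝ (LinearMap.range F) := ⟨span_range_ratCoordsHom hrank hindep⟩
  obtain ⟨e⟩ := ZLattice.nonempty_linearEquiv_pi (LinearMap.range F)
  exact ⟨((LinearEquiv.ofInjective F hF).trans e).toAddEquiv⟩

/-- A torsion-free abelian group of rank `k` carrying a ℤ-homogeneous,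
subadditive function bounded below by `s > 0` on nonzero elements, which extends
(via linearly independent `σ₁,…,σ_k`) to a norm on `ℝ^k`, is isomorphic to `ℤ^k`. -/
theorem stmt5 (Γ : Type*) [AddCommGroup Γ] (f : Γ → ℝ) (s : ℝ) (hs : 0 < s)
    (htf : ∀ (n : ℤ) (γ : Γ), n ≠ 0 → n • γ = 0 → γ = 0)
    (hhom : ∀ (n : ℤ) (γ : Γ), f (n • γ) = |(n : ℝ)| * f γ)
    (htri : ∀ γ δ : Γ, f (γ + δ) ≤ f γ + f δ)
    (hlow : ∀ γ : Γ, γ ≠ 0 → s ≤ f γ)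
    (k : ℕ) (σ : Fin k → Γ)
    (hindep : ∀ a : Fin k → ℤ, ∑ i, a i • σ i = 0 → a = 0)
    (hrank : ∀ γ : Γ, ∃ n : ℤ, n ≠ 0 ∧ ∃ a : Fin k → ℤ, n • γ = ∑ i, a i • σ i)
    (N : (Fin k → ℝ) → ℝ)
    (Nhom : ∀ (r : ℝ) (u : Fin k → ℝ), N (r • u) = |r| * N u)
    (Ntri : ∀ u v : Fin k → ℝ, N (u + v) ≤ N u + N v)
    (Ndef : ∀ u : Fin k → ℝ, N u = 0 ↔ u = 0)
    (hext : ∀ a : Fin k → ℤ, N (fun i => (a i : ℝ)) = f (∑ i, a i • σ i)) :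
    Nonempty (Γ ≃+ (Fin k → ℤ)) :=
  stmt5_general Γ f s hs hhom hlow k σ hindep hrank N Nhom Ntri hext
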